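/- arXiv:1101.6028 — 3 statements merged into one kernel-verified Lean document; each statement's English description precedes it below -/
import Mathlib

section
/- For any configuration x = (x₁,…,xₙ) ∈ (ℤ^d)^n of n ≥ 2 points, define diam(x) := max_{j,k} |x_j − x_k| and l(x) := max over nontrivial partitions J ⊔ K = {1,…,n} of min_{j∈J, k∈K} |x_j − x_k|, where |·| denotes a fixed norm on ℤ^d (e.g., the ℓ¹ norm). Then l(x) ≥ diam(x)/(n−1). -/
/-!
Pick a diametral pair `a, b` with `D = dist a b` and look at the at most `n` values
`dist a i ∈ [0, D]`. Consecutive values among them climb from `0` to `D` in at most `n - 1`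
steps, so some step `t < t + g` with no value strictly inside has `D ≤ (n - 1) g`. Splitting
the points at `t` puts `a` and `b` on different sides, and by the triangle inequality any two
points on different sides are at distance at least `g`.
-/

open Finset

theorem Finset.exists_large_gap {α : Type*} [AddCommGroup α] [LinearOrder α]
    [IsOrderedAddMonoid α] (S : Finset α) {a b : α} (ha : a ∈ S) (hb : b ∈ S)
    (hb_max : ∀ v ∈ S, v ≤ b) (hab : a < b) :
    ∃ t g, a ≤ t ∧ t < b ∧ 0 < g ∧ (∀ v ∈ S, v ≤ t ∨ t + g ≤ v) ∧
      b - a ≤ (#S - 1) • g := by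
  induction S using Finset.induction_on_max generalizing a b with
  | empty => simp at ha
  | insert c s hc ih =>
    obtain rfl : b = c := (mem_insert.1 hb).resolve_right fun hbs =>
      (hc b hbs).not_ge (hb_max c (mem_insert_self c s))
    have has : a ∈ s := (mem_insert.1 ha).resolve_left hab.ne
    set b' := s.max' ⟨a, has⟩
    have hb's : b' ∈ s := s.max'_mem _
    have hab' : a ≤ b' := s.le_max' a has
    have hs_le : ∀ v ∈ s, v ≤ b' := fun v hv => s.le_max' v hv
    have hb'b : b' < b := hc b' hb's
    have hcard : #(insert b s) - 1 = (#s - 1) + 1 := by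
      rw [card_insert_of_notMem fun h => (hc b h).false]
      have := card_pos.2 ⟨a, has⟩
      omega
    rw [hcard]
    -- Either the new top step `b' → b` is wide enough on its own, or it is narrower than the
    -- gap that the induction hypothesis finds inside `s`.
    by_cases hfar : b' - a ≤ (#s - 1) • (b - b')
    · refine ⟨b', b - b', hab', hb'b, sub_pos.2 hb'b, ?_, ?_⟩
      · intro v hv
        rcases mem_insert.1 hv with rfl | hv
        · simp
        · exact Or.inl (hs_le v hv)
      · calc b - a = (b' - a) + (b - b') := by abel
          _ ≤ (#s - 1) • (b - b') + (b - b') := by gcongr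
          _ = _ := (succ_nsmul _ _).symm
    · have hab'' : a < b' := lt_of_le_of_ne hab' fun h => hfar (by
        rw [← h, sub_self]; exact nsmul_nonneg (sub_pos.2 hab).le _)
      obtain ⟨t, g, hat, htb', hg, hsplit, hbound⟩ := ih has hb's hs_le hab''
      have hgap : b - b' < g :=
        lt_of_nsmul_lt_nsmul_right (#s - 1) ((not_le.1 hfar).trans_le hbound)
      refine ⟨t, g, hat, htb'.trans hb'b, hg, ?_, ?_⟩
      · intro v hv
        rcases mem_insert.1 hv with rfl | hv
        · exact Or.inr (((hsplit b' hb's).resolve_left htb'.not_ge).trans hb'b.le)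
        · exact hsplit v hv
      · calc b - a = (b' - a) + (b - b') := by abel
          _ ≤ (#s - 1) • g + g := by gcongr
          _ = _ := (succ_nsmul _ _).symm

theorem exists_finset_dist_le_mul_dist {ι X : Type*} [Fintype ι] [DecidableEq ι] [Nontrivial ι]
    [PseudoMetricSpace X] (x : ι → X) :
    ∃ J : Finset ι, J.Nonempty ∧ Jᶜ.Nonempty ∧ ∀ j ∈ J, ∀ k ∈ Jᶜ, ∀ a b : ι,
      dist (x a) (x b) ≤ ((Fintype.card ι : ℝ) - 1) * dist (x j) (x k) := by
  obtain ⟨⟨a, b⟩, hdiam⟩ := Finite.exists_max fun p : ι × ι => dist (x p.1) (x p.2)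
  have hcard : (1 : ℝ) ≤ Fintype.card ι := by exact_mod_cast Fintype.card_pos
  rcases (dist_nonneg : 0 ≤ dist (x a) (x b)).eq_or_lt with hzero | hpos
  · obtain ⟨i, k, hik⟩ := exists_pair_ne ι
    refine ⟨{i}, singleton_nonempty i, ⟨k, by simpa using hik.symm⟩,
      fun j _ k _ a' b' => ?_⟩
    calc dist (x a') (x b') ≤ 0 := hzero ▸ hdiam (a', b')
      _ ≤ _ := mul_nonneg (sub_nonneg.2 hcard) dist_nonneg
  set r : ι → ℝ := fun i => dist (x a) (x i)
  obtain ⟨t, g, hat, htb, hg, hsplit, hbound⟩ := (univ.image r).exists_large_gap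
    (mem_image_of_mem r (mem_univ a)) (mem_image_of_mem r (mem_univ b))
    (by simpa [r] using fun i => hdiam (a, i)) (by simpa [r] using hpos)
  refine ⟨univ.filter (r · ≤ t), ⟨a, by simpa using hat⟩, ⟨b, by simpa using htb⟩,
    fun j hj k hk a' b' => ?_⟩
  simp only [mem_filter, mem_univ, true_and, mem_compl, not_le] at hj hk
  have hgk : t + g ≤ r k :=
    (hsplit _ (mem_image_of_mem r (mem_univ k))).resolve_left hk.not_ge
  have hg_le : g ≤ dist (x j) (x k) := by linarith [dist_triangle (x a) (x j) (x k)]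
  have himage : #(univ.image r) - 1 ≤ Fintype.card ι - 1 := Nat.sub_le_sub_right card_image_le 1
  calc dist (x a') (x b') ≤ dist (x a) (x b) - r a := by simpa [r] using hdiam (a', b')
    _ ≤ (#(univ.image r) - 1) • g := hbound
    _ ≤ (Fintype.card ι - 1) • g := nsmul_le_nsmul_left hg.le himage
    _ ≤ ((Fintype.card ι : ℝ) - 1) * dist (x j) (x k) := by
      rw [nsmul_eq_mul, Nat.cast_sub Fintype.card_pos, Nat.cast_one]
      exact mul_le_mul_of_nonneg_left hg_le (sub_nonneg.2 hcard)

/-- Any `n`-point configuration in `ℤ^d` (with the ℓ¹ norm) admits a nontrivial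
partition `J ⊔ Jᶜ` whose splitting width is at least `diam(x)/(n-1)`; i.e.
`l(x) ≥ diam(x)/(n-1)`. -/
theorem stmt1 (n d : ℕ) (hn : 2 ≤ n) (x : Fin n → Fin d → ℤ) :
    ∃ J : Finset (Fin n), J.Nonempty ∧ Jᶜ.Nonempty ∧
      ∀ j ∈ J, ∀ k ∈ Jᶜ, ∀ a b : Fin n,
        (∑ i, |x a i - x b i|) ≤ ((n : ℤ) - 1) * ∑ i, |x j i - x k i| := by
  have : Nontrivial (Fin n) := Fin.nontrivial_iff_two_le.2 hn
  let y : Fin n → PiLp 1 (fun _ : Fin d => ℝ) := fun a => WithLp.toLp 1 fun i => (x a i : ℝ)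
  have hdist (a b : Fin n) : dist (y a) (y b) = ((∑ i, |x a i - x b i| : ℤ) : ℝ) := by
    simp [y, PiLp.dist_eq_of_L1, Real.dist_eq]
  obtain ⟨J, hJ, hJc, hsplit⟩ := exists_finset_dist_le_mul_dist y
  refine ⟨J, hJ, hJc, fun j hj k hk a b => ?_⟩
  have := hsplit j hj k hk a b
  rw [hdist, hdist, Fintype.card_fin] at this
  exact_mod_cast this
end

section
/- Let d, n ∈ ℕ and ξ' > 0. Then there exists a constant C(n,d) < ∞ such that for every a ∈ ℤ^{nd}, Σ_{u ∈ ℤ^{nd}} exp(−dist_H(a, u)/ξ') ≤ C(n,d) · ξ'^{nd}, where dist_H is the Hausdorff pseudo-distance between configurations a = (a₁,…,aₙ) and u = (u₁,…,uₙ) in (ℤ^d)^n, defined by dist_H(x,y) := max{max_i dist(x_i, {y₁,…,yₙ}), max_i dist({x₁,…,xₙ}, y_i)} with dist the ℓ¹ distance on ℤ^d. -/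
noncomputable section

/-- ℓ¹ distance on `ℤ^d` (real-valued). -/
def distL1 {d : ℕ} (a b : Fin d → ℤ) : ℝ := ∑ i, |(a i : ℝ) - (b i : ℝ)|

/-- Hausdorff pseudo-distance between `n`-particle configurations in `ℤ^d`. -/
def distHaus {n d : ℕ} [NeZero n] (x y : Fin n → Fin d → ℤ) : ℝ :=
  max
    (Finset.univ.sup' Finset.univ_nonempty fun i =>
      Finset.univ.inf' Finset.univ_nonempty fun j => distL1 (x i) (y j))
    (Finset.univ.sup' Finset.univ_nonempty fun j =>
      Finset.univ.inf' Finset.univ_nonempty fun i => distL1 (x i) (y j))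

open scoped ENNReal

/-- Factorization of a `tsum` over a finite product of copies of `β`. -/
lemma aux_tsum_pi_prod {β : Type*} :
    ∀ (m : ℕ) (g : Fin m → β → ℝ≥0∞),
      ∑' u : Fin m → β, ∏ i, g i (u i) = ∏ i, ∑' b, g i b := by
  intro m
  induction m with
  | zero =>
    intro g
    haveI : Subsingleton (Fin 0 → β) := ⟨fun a b => funext fun i => i.elim0⟩
    simp only [Finset.univ_eq_empty, Finset.prod_empty]
    rw [tsum_eq_single (fun i => i.elim0) (fun b' hb => absurd (Subsingleton.elim b' _) hb)]
  | succ m ih =>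
    intro g
    have e := Fin.consEquiv fun _ : Fin (m + 1) => β
    calc ∑' u : Fin (m + 1) → β, ∏ i, g i (u i)
        = ∑' p : β × (Fin m → β),
            ∏ i, g i ((Fin.consEquiv fun _ : Fin (m + 1) => β) p i) :=
          ((Fin.consEquiv fun _ : Fin (m + 1) => β).tsum_eq
            fun u => ∏ i, g i (u i)).symm
      _ = ∑' (b : β) (v : Fin m → β),
            ∏ i, g i ((Fin.consEquiv fun _ : Fin (m + 1) => β) (b, v) i) :=
          ENNReal.tsum_prod'
      _ = ∑' (b : β) (v : Fin m → β), g 0 b * ∏ i : Fin m, g i.succ (v i) := by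
          congr 1; funext b; congr 1; funext v
          rw [show ((Fin.consEquiv fun _ : Fin (m + 1) => β) (b, v)) = Fin.cons b v
            from rfl, Fin.prod_univ_succ, Fin.cons_zero]
          simp [Fin.cons_succ]
      _ = (∑' b : β, g 0 b) * ∑' v : Fin m → β, ∏ i : Fin m, g i.succ (v i) := by
          simp_rw [ENNReal.tsum_mul_left, ENNReal.tsum_mul_right]
      _ = ∏ i : Fin (m + 1), ∑' b, g i b := by
          rw [ih fun i => g i.succ, Fin.prod_univ_succ]

/-- 1-dimensional exponential sum bound. -/
lemma aux_one_dim {L : ℝ} (hL : 1 ≤ L) (c : ℤ) :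
    ∑' t : ℤ, ENNReal.ofReal (Real.exp (-|(c : ℝ) - (t : ℝ)| / L)) ≤
      ENNReal.ofReal (6 * L) := by
  have hL0 : (0 : ℝ) < L := lt_of_lt_of_le one_pos hL
  -- translate
  have htr : ∑' t : ℤ, ENNReal.ofReal (Real.exp (-|(c : ℝ) - (t : ℝ)| / L)) =
      ∑' t : ℤ, ENNReal.ofReal (Real.exp (-|(t : ℝ)| / L)) := by
    rw [← (Equiv.subLeft c).tsum_eq
      (fun t : ℤ => ENNReal.ofReal (Real.exp (-|(c : ℝ) - (t : ℝ)| / L)))]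
    congr 1; funext t
    have : (c : ℝ) - ((c - t : ℤ) : ℝ) = (t : ℝ) := by push_cast; ring
    simp [Equiv.subLeft, this]
  rw [htr]
  set r : ℝ := Real.exp (-1 / L) with hr_def
  have hr0 : 0 < r := Real.exp_pos _
  have hr1 : r < 1 := by
    rw [hr_def]
    apply Real.exp_lt_one_iff.mpr
    rw [neg_div]
    exact neg_neg_iff_pos.mpr (by positivity)
  -- each natural term is a geometric term
  have hpow : ∀ k : ℕ, Real.exp (-(k : ℝ) / L) = r ^ k := by
    intro k
    rw [hr_def, ← Real.exp_nat_mul]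
    congr 1; ring
  have hgeom : ∑' k : ℕ, ENNReal.ofReal (Real.exp (-(k : ℝ) / L)) ≤
      ENNReal.ofReal (3 * L) := by
    have : ∀ k : ℕ, ENNReal.ofReal (Real.exp (-(k : ℝ) / L)) =
        (ENNReal.ofReal r) ^ k := by
      intro k; rw [hpow k, ENNReal.ofReal_pow hr0.le]
    simp_rw [this]
    rw [ENNReal.tsum_geometric]
    have h1r : 1 - ENNReal.ofReal r = ENNReal.ofReal (1 - r) := by
      rw [ENNReal.ofReal_sub _ hr0.le, ENNReal.ofReal_one]
    rw [h1r]
    -- key real estimate : 1/(3L) ≤ 1 - r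
    have hE1 : 1 / L + 1 ≤ Real.exp (1 / L) := Real.add_one_le_exp (1 / L)
    have hE3 : Real.exp (1 / L) ≤ 3 := by
      calc Real.exp (1 / L) ≤ Real.exp 1 := by
            apply Real.exp_le_exp.mpr
            rw [div_le_one hL0]; exact hL
        _ ≤ 3 := by linarith [Real.exp_one_lt_d9.le]
    have hrE : r * Real.exp (1 / L) = 1 := by
      rw [hr_def, ← Real.exp_add, neg_div, neg_add_cancel, Real.exp_zero]
    have hr3 : 1 ≤ 3 * r := by nlinarith
    have hLE : L + 1 ≤ L * Real.exp (1 / L) := by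
      have := mul_le_mul_of_nonneg_left hE1 hL0.le
      calc L + 1 = L * (1 / L + 1) := by
            rw [mul_add, mul_one_div_cancel hL0.ne']; ring
        _ ≤ L * Real.exp (1 / L) := this
    have hkey : r * L + r ≤ L := by nlinarith
    have hmain : 1 / (3 * L) ≤ 1 - r := by
      rw [div_le_iff₀ (by positivity)]
      nlinarith
    have h1r0 : 0 < 1 - r := by linarith
    calc (ENNReal.ofReal (1 - r))⁻¹ ≤ (ENNReal.ofReal (1 / (3 * L)))⁻¹ := by
          apply ENNReal.inv_le_inv.mpr
          exact ENNReal.ofReal_le_ofReal hmain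
      _ = ENNReal.ofReal (3 * L) := by
          rw [one_div, ENNReal.ofReal_inv_of_pos (by positivity), inv_inv]
  -- split ℤ into ℕ and negatives
  have hsplit : ∑' t : ℤ, ENNReal.ofReal (Real.exp (-|(t : ℝ)| / L)) =
      (∑' k : ℕ, ENNReal.ofReal (Real.exp (-|((k : ℤ) : ℝ)| / L))) +
      ∑' k : ℕ, ENNReal.ofReal (Real.exp (-|((-(k + 1) : ℤ) : ℝ)| / L)) :=
    tsum_of_nat_of_neg_add_one ENNReal.summable ENNReal.summable
  rw [hsplit]
  have h1 : ∑' k : ℕ, ENNReal.ofReal (Real.exp (-|((k : ℤ) : ℝ)| / L)) ≤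
      ENNReal.ofReal (3 * L) := by
    refine le_trans (le_of_eq ?_) hgeom
    congr 1; funext k
    congr 2
    rw [abs_of_nonneg (by positivity)]; push_cast; ring
  have h2 : ∑' k : ℕ, ENNReal.ofReal (Real.exp (-|((-(k + 1) : ℤ) : ℝ)| / L)) ≤
      ENNReal.ofReal (3 * L) := by
    refine le_trans (ENNReal.tsum_le_tsum fun k => ?_) hgeom
    apply ENNReal.ofReal_le_ofReal
    apply Real.exp_le_exp.mpr
    have habs : |((-(k + 1) : ℤ) : ℝ)| = (k : ℝ) + 1 := by
      push_cast; rw [abs_neg, abs_of_nonneg (by positivity)]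
    rw [habs]
    exact (div_le_div_iff_of_pos_right hL0).mpr (by linarith)
  calc _ ≤ ENNReal.ofReal (3 * L) + ENNReal.ofReal (3 * L) := add_le_add h1 h2
    _ = ENNReal.ofReal (6 * L) := by
        rw [← ENNReal.ofReal_add (by positivity) (by positivity)]; congr 1; ring

/-- `d`-dimensional exponential sum bound. -/
lemma aux_d_dim {d : ℕ} {L : ℝ} (hL : 1 ≤ L) (b : Fin d → ℤ) :
    ∑' v : Fin d → ℤ, ENNReal.ofReal (Real.exp (-(distL1 b v) / L)) ≤
      ENNReal.ofReal ((6 * L) ^ d) := by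
  have hL0 : (0 : ℝ) < L := lt_of_lt_of_le one_pos hL
  have hfac : ∀ v : Fin d → ℤ, ENNReal.ofReal (Real.exp (-(distL1 b v) / L)) =
      ∏ k : Fin d, ENNReal.ofReal (Real.exp (-|((b k : ℝ)) - (v k : ℝ)| / L)) := by
    intro v
    rw [← ENNReal.ofReal_prod_of_nonneg (fun k _ => (Real.exp_pos _).le),
      ← Real.exp_sum]
    congr 1
    rw [distL1]
    rw [← Finset.sum_div, ← Finset.sum_neg_distrib]
  simp_rw [hfac]
  rw [aux_tsum_pi_prod (β := ℤ) d fun k (t : ℤ) => ENNReal.ofReal (Real.exp (-|((b k : ℝ)) - (t : ℝ)| / L))]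
  calc ∏ k : Fin d, ∑' t : ℤ, ENNReal.ofReal (Real.exp (-|((b k : ℝ)) - (t : ℝ)| / L))
      ≤ ∏ _k : Fin d, ENNReal.ofReal (6 * L) :=
        Finset.prod_le_prod' fun k _ => aux_one_dim hL (b k)
    _ = ENNReal.ofReal ((6 * L) ^ d) := by
        rw [Finset.prod_const, Finset.card_univ, Fintype.card_fin,
          ← ENNReal.ofReal_pow (by positivity)]

set_option maxHeartbeats 1000000 in
/-- Lemma A.3 of Aizenman–Warzel: exponential summability w.r.t. the Hausdorff
pseudo-distance, with the sum controlled by `C(n,d)·ξ'^{nd}`. -/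
theorem stmt14 (n d : ℕ) [NeZero n] [NeZero d] :
    ∃ C : ℝ, 0 < C ∧ ∀ ξ' : ℝ, 1 ≤ ξ' → ∀ a : Fin n → Fin d → ℤ,
      ∑' u : Fin n → Fin d → ℤ, ENNReal.ofReal (Real.exp (-(distHaus a u) / ξ')) ≤
        ENNReal.ofReal (C * ξ' ^ (n * d)) := by
  have hn : 0 < n := Nat.pos_of_ne_zero (NeZero.ne n)
  have hn1 : (1 : ℝ) ≤ (n : ℝ) := by exact_mod_cast hn
  refine ⟨(n : ℝ) ^ n * (6 * n) ^ (n * d), by positivity, ?_⟩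
  intro ξ' hξ a
  have hξ0 : (0 : ℝ) < ξ' := lt_of_lt_of_le one_pos hξ
  set L : ℝ := (n : ℝ) * ξ' with hLdef
  have hL : 1 ≤ L := by
    calc (1 : ℝ) = 1 * 1 := by ring
      _ ≤ (n : ℝ) * ξ' := mul_le_mul hn1 hξ zero_le_one (by positivity)
  have hL0 : (0 : ℝ) < L := lt_of_lt_of_le one_pos hL
  -- pointwise bound
  have hpt : ∀ u : Fin n → Fin d → ℤ,
      ENNReal.ofReal (Real.exp (-(distHaus a u) / ξ')) ≤
      ∏ j : Fin n, ∑ i : Fin n,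
        ENNReal.ofReal (Real.exp (-(distL1 (a i) (u j)) / L)) := by
    intro u
    set m : Fin n → ℝ := fun j =>
      Finset.univ.inf' Finset.univ_nonempty fun i => distL1 (a i) (u j) with hm
    have hmle : ∀ j, m j ≤ distHaus a u := fun j =>
      le_trans (Finset.le_sup' _ (Finset.mem_univ j)) (le_max_right _ _)
    have hsum : ∑ j, m j ≤ (n : ℝ) * distHaus a u := by
      calc ∑ j, m j ≤ ∑ _j : Fin n, distHaus a u :=
            Finset.sum_le_sum fun j _ => hmle j
        _ = (n : ℝ) * distHaus a u := by
            rw [Finset.sum_const, Finset.card_univ, Fintype.card_fin, nsmul_eq_mul]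
    -- step 1 : exp(-D/ξ') ≤ ∏ exp(-m j / L)
    have hstep1 : Real.exp (-(distHaus a u) / ξ') ≤
        ∏ j : Fin n, Real.exp (-(m j) / L) := by
      rw [← Real.exp_sum]
      apply Real.exp_le_exp.mpr
      have : ∑ j, -(m j) / L = -(∑ j, m j) / L := by
        rw [← Finset.sum_div, ← Finset.sum_neg_distrib]
      rw [this, hLdef, div_le_div_iff₀ hξ0 (by positivity)]
      nlinarith [hsum]
    -- step 2 : exp(-m j / L) ≤ ∑ i exp(-dist/L)
    have hstep2 : ∀ j : Fin n, Real.exp (-(m j) / L) ≤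
        ∑ i : Fin n, Real.exp (-(distL1 (a i) (u j)) / L) := by
      intro j
      obtain ⟨i₀, -, hi₀⟩ :=
        Finset.exists_mem_eq_inf' (Finset.univ_nonempty)
          (fun i => distL1 (a i) (u j))
      have : m j = distL1 (a i₀) (u j) := hi₀
      rw [this]
      exact Finset.single_le_sum
        (f := fun i => Real.exp (-(distL1 (a i) (u j)) / L))
        (fun i _ => (Real.exp_pos _).le) (Finset.mem_univ i₀)
    calc ENNReal.ofReal (Real.exp (-(distHaus a u) / ξ'))
        ≤ ENNReal.ofReal (∏ j : Fin n,
            ∑ i : Fin n, Real.exp (-(distL1 (a i) (u j)) / L)) := by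
          apply ENNReal.ofReal_le_ofReal
          refine le_trans hstep1 (Finset.prod_le_prod
            (fun j _ => (Real.exp_pos _).le) (fun j _ => hstep2 j))
      _ = ∏ j : Fin n, ENNReal.ofReal
            (∑ i : Fin n, Real.exp (-(distL1 (a i) (u j)) / L)) := by
          rw [ENNReal.ofReal_prod_of_nonneg]
          intro j _
          exact Finset.sum_nonneg fun i _ => (Real.exp_pos _).le
      _ = ∏ j : Fin n, ∑ i : Fin n,
            ENNReal.ofReal (Real.exp (-(distL1 (a i) (u j)) / L)) := by
          congr 1; funext j
          rw [ENNReal.ofReal_sum_of_nonneg fun i _ => (Real.exp_pos _).le]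
  -- sum the pointwise bound and factorize
  calc ∑' u : Fin n → Fin d → ℤ, ENNReal.ofReal (Real.exp (-(distHaus a u) / ξ'))
      ≤ ∑' u : Fin n → Fin d → ℤ, ∏ j : Fin n, ∑ i : Fin n,
          ENNReal.ofReal (Real.exp (-(distL1 (a i) (u j)) / L)) :=
        ENNReal.tsum_le_tsum hpt
    _ = ∏ j : Fin n, ∑' v : Fin d → ℤ, ∑ i : Fin n,
          ENNReal.ofReal (Real.exp (-(distL1 (a i) v) / L)) :=
        aux_tsum_pi_prod (β := Fin d → ℤ) n fun j v => ∑ i : Fin n,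
          ENNReal.ofReal (Real.exp (-(distL1 (a i) v) / L))
    _ = ∏ j : Fin n, ∑ i : Fin n, ∑' v : Fin d → ℤ,
          ENNReal.ofReal (Real.exp (-(distL1 (a i) v) / L)) := by
        congr 1; funext j
        exact Summable.tsum_finsetSum fun i _ => ENNReal.summable
    _ ≤ ∏ _j : Fin n, ∑ _i : Fin n, ENNReal.ofReal ((6 * L) ^ d) := by
        refine Finset.prod_le_prod' fun j _ => Finset.sum_le_sum fun i _ => ?_
        exact aux_d_dim hL (a i)
    _ ≤ ENNReal.ofReal ((n : ℝ) ^ n * (6 * n) ^ (n * d) * ξ' ^ (n * d)) := by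
        rw [Finset.sum_const, Finset.card_univ, Fintype.card_fin, nsmul_eq_mul,
          Finset.prod_const, Finset.card_univ, Fintype.card_fin]
        have hcast : (n : ℝ≥0∞) = ENNReal.ofReal (n : ℝ) := by
          simp [ENNReal.ofReal_natCast]
        rw [hcast, ← ENNReal.ofReal_mul (by positivity),
          ← ENNReal.ofReal_pow (by positivity)]
        apply ENNReal.ofReal_le_ofReal
        have : ((n : ℝ) * (6 * L) ^ d) ^ n =
            (n : ℝ) ^ n * (6 * (n : ℝ)) ^ (n * d) * ξ' ^ (n * d) := by
          rw [hLdef, show (6 : ℝ) * ((n : ℝ) * ξ') = (6 * (n : ℝ)) * ξ' by ring,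
            mul_pow, mul_pow, mul_pow, ← pow_mul, ← pow_mul, mul_comm d n]
          ring
        rw [this]
end
end

section
/- Let G = (ℤ/Lℤ)² be the torus lattice with spins on edges, and let l₁, l₂ be two paths (1-chains) on the lattice with the same boundary (same pair of endpoints). Then the path operators W_{l₁} = Π_{j∈l₁} Z_j and W_{l₂} = Π_{j∈l₂} Z_j satisfy W_{l₁} W_{l₂} = Π_{p ∈ S} B_p for some set S of plaquettes if and only if the closed loop l₁ + l₂ (symmetric difference) is homologically trivial; in that case W_{l₁}|g⟩ = W_{l₂}|g⟩ for every ground state |g⟩ of the toric code (since B_p|g⟩ = |g⟩). -/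
open scoped symmDiff

noncomputable section

abbrev TVertex (L : ℕ) := Fin L × Fin L
abbrev TEdge (L : ℕ) := TVertex L × Bool
abbrev TCSpace (L : ℕ) := (TEdge L → Bool) → ℂ

/-- The four edges of the plaquette at vertex `v`. -/
def plaquette (L : ℕ) [NeZero L] (v : TVertex L) : Finset (TEdge L) :=
  {(v, false), (v, true), ((v.1, v.2 + 1), false), ((v.1 + 1, v.2), true)}

/-- The four edges of the star at vertex `v`. -/
def starE (L : ℕ) [NeZero L] (v : TVertex L) : Finset (TEdge L) :=
  {(v, false), (v, true), ((v.1 - 1, v.2), false), ((v.1, v.2 - 1), true)}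

/-- The path operator `W_l = Π_{j∈l} Z_j` for a 1-chain `l`. -/
def Wop (L : ℕ) (l : Finset (TEdge L)) : TCSpace L → TCSpace L :=
  fun ψ σ => (∏ e ∈ l, (if σ e then (-1 : ℂ) else 1)) * ψ σ

/-- The plaquette operator `B_p`. -/
def Bop (L : ℕ) [NeZero L] (v : TVertex L) : TCSpace L → TCSpace L :=
  fun ψ σ => (∏ e ∈ plaquette L v, (if σ e then (-1 : ℂ) else 1)) * ψ σ

/-- The boundary (symmetric difference) of the plaquettes in `S`: the edges
lying in an odd number of plaquettes of `S`. -/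
def plaqBoundary (L : ℕ) [NeZero L] (S : Finset (TVertex L)) : Finset (TEdge L) :=
  Finset.univ.filter fun e => Odd (S.filter fun v => e ∈ plaquette L v).card

/-- The set of endpoints (vertices incident to an odd number of edges) of a 1-chain. -/
def chainBoundary (L : ℕ) [NeZero L] (l : Finset (TEdge L)) : Finset (TVertex L) :=
  Finset.univ.filter fun v => Odd (l.filter fun e => e ∈ starE L v).card

/-!
Since `Z_j² = 1`, a product of `Z`-strings is the `Z`-string on the symmetric difference, so
`W_{l₁} W_{l₂} = W_{l₁ ∆ l₂}` and `Π_{p ∈ S} B_p = W_{∂S}`. A `Z`-string determines its support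
(test it on the configuration with a single flipped edge), hence `W_{l₁} W_{l₂} = Π_{p ∈ S} B_p`
exactly when `l₁ ∆ l₂ = ∂S`. On a ground state every `B_p`, hence `W_{∂S}`, acts trivially, and
then `W_{l₁} g = W_{l₂} W_{l₁ ∆ l₂} g = W_{l₂} g`.
-/

namespace Finset

theorem prod_symmDiff_of_mul_self_eq_one {α M : Type*} [DecidableEq α] [CommMonoid M]
    {f : α → M} (hf : ∀ a, f a * f a = 1) (A B : Finset α) :
    ∏ a ∈ A ∆ B, f a = (∏ a ∈ A, f a) * ∏ a ∈ B, f a := by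
  have hsplit : ∏ a ∈ A ∪ B, f a = (∏ a ∈ A ∆ B, f a) * ∏ a ∈ A ∩ B, f a :=
    (congrArg (∏ a ∈ ·, f a) (symmDiff_sup_inf A B).symm).trans
      (prod_union (disjoint_symmDiff_inf A B))
  rw [← prod_union_inter, hsplit, mul_assoc, ← prod_mul_distrib, prod_congr rfl fun a _ => hf a,
    prod_const_one, mul_one]

end Finset

def zStringSign {α : Type*} (σ : α → Bool) (A : Finset α) : ℂ :=
  ∏ e ∈ A, if σ e then (-1 : ℂ) else 1

section zStringSign

variable {α : Type*} [DecidableEq α]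

theorem zStringSign_symmDiff (σ : α → Bool) (A B : Finset α) :
    zStringSign σ (A ∆ B) = zStringSign σ A * zStringSign σ B :=
  Finset.prod_symmDiff_of_mul_self_eq_one (fun e => by cases σ e <;> norm_num) A B

theorem zStringSign_single_flip (A : Finset α) (e₀ : α) :
    zStringSign (fun e => decide (e = e₀)) A = if e₀ ∈ A then -1 else 1 := by
  simp only [zStringSign, decide_eq_true_eq]
  exact Finset.prod_ite_eq' A e₀ fun _ => -1

theorem eq_of_zStringSign_eq {A B : Finset α} (h : ∀ σ, zStringSign σ A = zStringSign σ B) :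
    A = B := by
  ext e₀
  have h₀ := h fun e => decide (e = e₀)
  rw [zStringSign_single_flip, zStringSign_single_flip] at h₀
  split_ifs at h₀ <;> norm_num at h₀ <;> tauto

end zStringSign

section ToricCode

variable {L : ℕ}

theorem Wop_apply (l : Finset (TEdge L)) (ψ : TCSpace L) (σ : TEdge L → Bool) :
    Wop L l ψ σ = zStringSign σ l * ψ σ :=
  rfl

theorem Wop_comp (l₁ l₂ : Finset (TEdge L)) : Wop L l₁ ∘ Wop L l₂ = Wop L (l₁ ∆ l₂) := by
  funext ψ σ
  simp only [Function.comp_apply, Wop_apply, zStringSign_symmDiff, mul_assoc]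

theorem Wop_empty : Wop L ∅ = id := by
  funext ψ σ
  simp [Wop_apply, zStringSign]

theorem Wop_injective : Function.Injective (Wop L) := fun A B h =>
  eq_of_zStringSign_eq fun σ => by
    simpa [Wop_apply] using congrFun (congrFun h fun _ => 1) σ

variable [NeZero L]

theorem Bop_eq_Wop (v : TVertex L) : Bop L v = Wop L (plaquette L v) :=
  rfl

theorem plaqBoundary_insert {v : TVertex L} {S : Finset (TVertex L)} (hv : v ∉ S) :
    plaqBoundary L (insert v S) = plaquette L v ∆ plaqBoundary L S := by
  ext e
  simp only [plaqBoundary, Finset.mem_filter, Finset.mem_univ, true_and, Finset.mem_symmDiff,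
    Finset.filter_insert]
  by_cases he : e ∈ plaquette L v
  · have hv' : v ∉ S.filter fun w => e ∈ plaquette L w := by simp [hv]
    rw [if_pos he, Finset.card_insert_of_notMem hv']
    simp [he, Nat.odd_add_one]
  · simp [he]

theorem prod_zStringSign_plaquette (σ : TEdge L → Bool) (S : Finset (TVertex L)) :
    ∏ v ∈ S, zStringSign σ (plaquette L v) = zStringSign σ (plaqBoundary L S) := by
  induction S using Finset.induction with
  | empty => simp [plaqBoundary, zStringSign]
  | insert v S hv ih => rw [Finset.prod_insert hv, ih, plaqBoundary_insert hv, zStringSign_symmDiff]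

theorem prod_plaquette_operators_eq_Wop (S : Finset (TVertex L)) :
    (fun ψ σ => (∏ v ∈ S, ∏ e ∈ plaquette L v, (if σ e then (-1 : ℂ) else 1)) * ψ σ) =
      Wop L (plaqBoundary L S) := by
  funext ψ σ
  exact congrArg (· * ψ σ) (prod_zStringSign_plaquette σ S)

theorem Wop_plaqBoundary_apply_of_ground {g : TCSpace L} (hg : ∀ v, Bop L v g = g)
    (S : Finset (TVertex L)) : Wop L (plaqBoundary L S) g = g := by
  induction S using Finset.induction with
  | empty => simp [plaqBoundary, Wop_empty]
  | insert v S hv ih =>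
    rw [plaqBoundary_insert hv, ← Wop_comp, Function.comp_apply, ih, ← Bop_eq_Wop, hg]

end ToricCode

theorem stmt19_general (L : ℕ) [NeZero L] (l₁ l₂ : Finset (TEdge L)) :
    ((∃ S : Finset (TVertex L),
        Wop L l₁ ∘ Wop L l₂ = fun ψ σ =>
          (∏ v ∈ S, ∏ e ∈ plaquette L v, (if σ e then (-1 : ℂ) else 1)) * ψ σ) ↔
      ∃ S : Finset (TVertex L), l₁ ∆ l₂ = plaqBoundary L S) ∧
    ((∃ S : Finset (TVertex L), l₁ ∆ l₂ = plaqBoundary L S) →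
      ∀ g : TCSpace L, (∀ v : TVertex L, Bop L v g = g) → Wop L l₁ g = Wop L l₂ g) := by
  refine ⟨exists_congr fun S => ?_, ?_⟩
  · rw [Wop_comp, prod_plaquette_operators_eq_Wop]
    exact Wop_injective.eq_iff
  · rintro ⟨S, hS⟩ g hg
    calc Wop L l₁ g = Wop L (l₂ ∆ (l₂ ∆ l₁)) g := by rw [symmDiff_symmDiff_cancel_left]
      _ = Wop L l₂ (Wop L (l₂ ∆ l₁) g) := by rw [← Wop_comp]; rfl
      _ = Wop L l₂ g := by rw [symmDiff_comm, hS, Wop_plaqBoundary_apply_of_ground hg]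

/-- Two path operators with the same endpoints multiply to a product of
plaquette operators iff the loop `l₁ ∆ l₂` is homologically trivial (a boundary
of a set of plaquettes), and in that case they act identically on every ground
state of the toric code. -/
theorem stmt19 (L : ℕ) [NeZero L] (hL : 2 ≤ L) (l₁ l₂ : Finset (TEdge L))
    (hends : chainBoundary L l₁ = chainBoundary L l₂) :
    ((∃ S : Finset (TVertex L),
        Wop L l₁ ∘ Wop L l₂ = fun ψ σ =>
          (∏ v ∈ S, ∏ e ∈ plaquette L v, (if σ e then (-1 : ℂ) else 1)) * ψ σ) ↔
      ∃ S : Finset (TVertex L), l₁ ∆ l₂ = plaqBoundary L S) ∧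
    ((∃ S : Finset (TVertex L), l₁ ∆ l₂ = plaqBoundary L S) →
      ∀ g : TCSpace L, (∀ v : TVertex L, Bop L v g = g) → Wop L l₁ g = Wop L l₂ g) :=
  stmt19_general L l₁ l₂
end
end
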